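/- Let r be an irreflexive and transitive relation on a set S, let n ≥ 2, and let A, B : Fin n → S (with indices modulo n). Assume that for every i ∈ {0,…,n−2}: (i) if r (A i) (A (i+1)) then r (B i) (B (i+1)), and (ii) if r (B i) (B (i+1)) then r (A (i+1)) (A (i+2 mod n)). If r (A 0) (A 1), then we obtain a contradiction. -/

import Mathlib

/-! Conditions (i) and (ii) chain into `r (A i) (A (i + 1))` for every `i : Fin n`, the step at
`i = n - 2` giving the wrap-around `r (A (n - 1)) (A 0)`. Going once around the cycle,
transitivity yields `r (A 0) (A 0)`, against irreflexivity. -/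

open Fin.NatCast

theorem Fin.forall_of_zero_of_add_one {n : ℕ} [NeZero n] {P : Fin n → Prop} (h0 : P 0)
    (hstep : ∀ i : Fin n, i.val + 1 < n → P i → P (i + 1)) (i : Fin n) : P i := by
  obtain ⟨m, rfl⟩ := Nat.exists_eq_succ_of_ne_zero (NeZero.ne n)
  induction i using Fin.induction with
  | zero => exact h0
  | succ i ih =>
    rw [← Fin.coeSucc_eq_succ]
    exact hstep _ (by simp) ih

theorem Fin.rel_zero_self_of_forall_rel_add_one {S : Type*} {r : S → S → Prop} [IsTrans S r]
    {n : ℕ} [NeZero n] {A : Fin n → S}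
    (hA : ∀ i : Fin n, r (A i) (A (i + 1))) : r (A 0) (A 0) := by
  have hcycle : r (A ((0 : ℕ) : Fin n)) (A ((n : ℕ) : Fin n)) :=
    Nat.rel_of_forall_rel_succ_of_lt r (f := fun k : ℕ => A k)
      (fun k => by simpa only [Nat.cast_succ] using hA k) (Nat.pos_of_neZero n)
  simpa only [Nat.cast_zero, Fin.natCast_self] using hcycle

theorem stmt_1_general {S : Type*} (r : S → S → Prop)
    (hirr : Irreflexive r) (htrans : Transitive r)
    (n : ℕ) [NeZero n] (A B : Fin n → S)
    (h1 : ∀ i : Fin n, i.val ≤ n - 2 → r (A i) (A (i + 1)) → r (B i) (B (i + 1)))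
    (h2 : ∀ i : Fin n, i.val ≤ n - 2 → r (B i) (B (i + 1)) → r (A (i + 1)) (A (i + 2)))
    (h0 : r (A 0) (A 1)) : False := by
  have hA : ∀ i : Fin n, r (A i) (A (i + 1)) := by
    refine Fin.forall_of_zero_of_add_one (by simpa only [zero_add] using h0) fun i hi hAi => ?_
    have hi' : i.val ≤ n - 2 := by omega
    simpa only [add_assoc, one_add_one_eq_two] using h2 i hi' (h1 i hi' hAi)
  have : IsTrans S r := ⟨fun _ _ _ hab hbc => htrans hab hbc⟩
  exact hirr _ (Fin.rel_zero_self_of_forall_rel_add_one hA)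

theorem stmt_1 {S : Type*} (r : S → S → Prop)
    (hirr : Irreflexive r) (htrans : Transitive r)
    (n : ℕ) (hn : 2 ≤ n) [NeZero n] (A B : Fin n → S)
    (h1 : ∀ i : Fin n, i.val ≤ n - 2 → r (A i) (A (i + 1)) → r (B i) (B (i + 1)))
    (h2 : ∀ i : Fin n, i.val ≤ n - 2 → r (B i) (B (i + 1)) → r (A (i + 1)) (A (i + 2)))
    (h0 : r (A 0) (A 1)) : False :=
  stmt_1_general r hirr htrans n A B h1 h2 h0
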